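/- For every (x, ℓ) ∈ N(K), one has u_K(x − (1/‖ℓ‖) • ℓ) = ℓ. -/

import Mathlib

/-!
Since `x` minimises `⟪ℓ, ·⟫` over `K`, the value `⟪ℓ, x⟫` must be `-1`: were it larger, a whole ball
around `ℓ` would lie in the polar (because `K` is bounded), contradicting `ℓ ∈ ∂K°`. As `-ℓ` is an outer
normal of `K` at `x`, the point `x` is the nearest point of `K` to `x - ℓ / ‖ℓ‖`, and the formula for
`u_K` reduces to `(1 / ⟪ℓ / ‖ℓ‖, x⟫) • (-ℓ / ‖ℓ‖) = ℓ`.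
-/

open scoped RealInnerProductSpace
open Metric

variable {E : Type*} [NormedAddCommGroup E] [InnerProductSpace ℝ E]

def polarDual (K : Set E) : Set E := {m | ∀ y ∈ K, -1 ≤ ⟪m, y⟫}

theorem isClosed_polarDual (K : Set E) : IsClosed (polarDual K) := by
  simp only [polarDual, Set.ofPred_forall]
  exact isClosed_biInter fun y _ => isClosed_le continuous_const (continuous_id.inner continuous_const)

theorem mem_interior_polarDual {K : Set E} (hK : Bornology.IsBounded K) {ℓ : E} {a : ℝ}
    (ha : -1 < a) (hℓ : ∀ y ∈ K, a ≤ ⟪ℓ, y⟫) : ℓ ∈ interior (polarDual K) := by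
  obtain ⟨R, hR, hKR⟩ := hK.subset_closedBall_lt 0 0
  refine mem_interior.2 ⟨ball ℓ ((1 + a) / R), fun m hm y hy => ?_, isOpen_ball,
    mem_ball_self (div_pos (by linarith) hR)⟩
  have hyR : ‖y‖ ≤ R := by simpa using hKR hy
  have hmR : ‖m - ℓ‖ * R < 1 + a := by rwa [mem_ball, dist_eq_norm, lt_div_iff₀ hR] at hm
  calc -1 ≤ a - ‖m - ℓ‖ * R := by linarith
    _ ≤ ⟪ℓ, y⟫ - ‖m - ℓ‖ * ‖y‖ := by gcongr; exact hℓ y hy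
    _ ≤ ⟪ℓ, y⟫ + ⟪m - ℓ, y⟫ := by linarith [neg_le_of_abs_le (abs_real_inner_le_norm (m - ℓ) y)]
    _ = ⟪m, y⟫ := by rw [inner_sub_left]; ring

theorem inner_eq_neg_one_of_mem_frontier_polarDual {K : Set E} (hK : Bornology.IsBounded K)
    {x ℓ : E} (hx : x ∈ K) (hℓ : ℓ ∈ frontier (polarDual K))
    (hnormal : ∀ y ∈ K, ⟪ℓ, x - y⟫ ≤ 0) : ⟪ℓ, x⟫ = -1 := by
  refine le_antisymm (not_lt.1 fun hlt => hℓ.2 (mem_interior_polarDual hK hlt fun y hy => ?_))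
    ((isClosed_polarDual K).frontier_subset hℓ x hx)
  linarith [hnormal y hy, inner_sub_right (𝕜 := ℝ) ℓ x y]

theorem eq_of_dist_le_of_inner_nonneg {z x q : E} (hq : dist z q ≤ dist z x)
    (h : 0 ≤ ⟪z - x, x - q⟫) : q = x := by
  have hsplit := norm_add_sq_real (z - x) (x - q)
  rw [sub_add_sub_cancel] at hsplit
  rw [dist_eq_norm, dist_eq_norm] at hq
  have hsq : ‖x - q‖ ^ 2 ≤ 0 := by nlinarith [norm_nonneg (z - q), norm_nonneg (z - x)]
  exact (sub_eq_zero.1 (norm_eq_zero.1 (pow_eq_zero_iff two_ne_zero |>.1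
    (le_antisymm hsq (sq_nonneg _))))).symm

theorem eq_of_dist_sub_smul_le {K : Set E} {x ℓ q : E} {c : ℝ} (hc : 0 ≤ c)
    (hnormal : ∀ y ∈ K, ⟪ℓ, x - y⟫ ≤ 0) (hq : q ∈ K)
    (hdist : dist (x - c • ℓ) q ≤ dist (x - c • ℓ) x) : q = x := by
  refine eq_of_dist_le_of_inner_nonneg hdist ?_
  rw [sub_sub_cancel_left, inner_neg_left, real_inner_smul_left]
  nlinarith [hnormal q hq]

theorem stmt_6_general {n : ℕ}
    (K : Set (EuclideanSpace ℝ (Fin n)))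
    (hKcomp : IsCompact K)
    (p : EuclideanSpace ℝ (Fin n) → EuclideanSpace ℝ (Fin n))
    (hpmem : ∀ x, p x ∈ K)
    (hpmin : ∀ x, ∀ y ∈ K, dist x (p x) ≤ dist x y)
    (NK : Set (EuclideanSpace ℝ (Fin n) × EuclideanSpace ℝ (Fin n)))
    (hNK : NK = {z | z.1 ∈ frontier K ∧
        z.2 ∈ frontier {m : EuclideanSpace ℝ (Fin n) | ∀ y ∈ K, -1 ≤ ⟪m, y⟫} ∧
        ∀ x' ∈ K, ⟪z.2, z.1 - x'⟫ ≤ 0})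
    (x ℓ : EuclideanSpace ℝ (Fin n)) (hxl : (x, ℓ) ∈ NK) :
    (1 / ⟪p (x - (1 / ‖ℓ‖) • ℓ) - (x - (1 / ‖ℓ‖) • ℓ), p (x - (1 / ‖ℓ‖) • ℓ)⟫) •
        ((x - (1 / ‖ℓ‖) • ℓ) - p (x - (1 / ‖ℓ‖) • ℓ)) = ℓ := by
  subst hNK
  obtain ⟨hx, hℓ, hnormal⟩ := hxl
  have hxK : x ∈ K := hKcomp.isClosed.frontier_subset hx
  have hℓx : ⟪ℓ, x⟫ = -1 :=
    inner_eq_neg_one_of_mem_frontier_polarDual hKcomp.isBounded hxK hℓ hnormal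
  have hℓ0 : ℓ ≠ 0 := by rintro rfl; simp at hℓx
  have hp : p (x - (1 / ‖ℓ‖) • ℓ) = x :=
    eq_of_dist_sub_smul_le (by positivity) hnormal (hpmem _) (hpmin _ x hxK)
  rw [hp, sub_sub_cancel, sub_sub_cancel_left, real_inner_smul_left, hℓx, smul_neg, smul_smul]
  field_simp
  simp

/-- For every `(x, ℓ) ∈ N(K)`, one has `u_K(x − (1/‖ℓ‖) • ℓ) = ℓ`. -/
theorem stmt_6 {n : ℕ} (hn : 0 < n)
    (K : Set (EuclideanSpace ℝ (Fin n)))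
    (hKcomp : IsCompact K) (hKconv : Convex ℝ K)
    (h0 : (0 : EuclideanSpace ℝ (Fin n)) ∈ interior K)
    (p : EuclideanSpace ℝ (Fin n) → EuclideanSpace ℝ (Fin n))
    (hpmem : ∀ x, p x ∈ K)
    (hpmin : ∀ x, ∀ y ∈ K, dist x (p x) ≤ dist x y)
    (NK : Set (EuclideanSpace ℝ (Fin n) × EuclideanSpace ℝ (Fin n)))
    (hNK : NK = {z | z.1 ∈ frontier K ∧
        z.2 ∈ frontier {m : EuclideanSpace ℝ (Fin n) | ∀ y ∈ K, -1 ≤ ⟪m, y⟫} ∧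
        ∀ x' ∈ K, ⟪z.2, z.1 - x'⟫ ≤ 0})
    (x ℓ : EuclideanSpace ℝ (Fin n)) (hxl : (x, ℓ) ∈ NK) :
    (1 / ⟪p (x - (1 / ‖ℓ‖) • ℓ) - (x - (1 / ‖ℓ‖) • ℓ), p (x - (1 / ‖ℓ‖) • ℓ)⟫) •
        ((x - (1 / ‖ℓ‖) • ℓ) - p (x - (1 / ‖ℓ‖) • ℓ)) = ℓ :=
  stmt_6_general K hKcomp p hpmem hpmin NK hNK x ℓ hxl
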